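/- Let G be a group with cent(G) finite and let M be a maximal subgroup of G with |cent(M)| = |cent(G)|. Then either Z(M) = Z(G) (the center of M, viewed as a subgroup of G, equals the center of G), or M is isoclinic to G; in the latter case MZ(G) = G, the derived subgroup of M equals the derived subgroup of G, and M/Z(M) ≅ G/Z(G). -/

import Mathlib

/-- `cent G` is the set of centralizers of elements of `G`, as subgroups of `G`. -/
def cent (G : Type*) [Group G] : Set (Subgroup G) :=
  Set.range fun g : G => Subgroup.centralizer {g}

/-- `nacent G` is the set of non-abelian centralizers of elements of `G`. -/
def nacent (G : Type*) [Group G] : Set (Subgroup G) :=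
  {C | C ∈ cent G ∧ ¬ IsMulCommutative C}

/-!
If `Z(G) ≤ M`, restricting centralizers to `M` maps `{C_G(m) : m ∈ M} ⊆ cent(G)` onto `cent(M)`;
since `|cent(M)| = |cent(G)|` this map is injective. An element `m ∈ Z(M)` has
`C_G(m) ∩ M = M = C_G(1) ∩ M`, so `C_G(m) = G` and `Z(M) = Z(G)`.
Otherwise maximality gives `M Z(G) = G`, and then every element of `G` is an element of `M` up to a
central factor, which changes neither commutators nor cosets of `Z(G)`.
-/

section CentralizerRestriction

open Subgroup

variable {G : Type*} [Group G] {H : Subgroup G}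

theorem Subgroup.subgroupOf_center_le_center (H : Subgroup G) :
    (center G).subgroupOf H ≤ center H :=
  fun _ hh => mem_center_iff.2 fun k => Subtype.ext (mem_center_iff.1 (mem_subgroupOf.1 hh) k)

theorem Subgroup.center_le_map_subtype_center (hZ : center G ≤ H) :
    center G ≤ (center H).map H.subtype :=
  calc center G = ((center G).subgroupOf H).map H.subtype := by
        rw [subgroupOf_map_subtype, inf_eq_left.2 hZ]
    _ ≤ (center H).map H.subtype := map_mono (subgroupOf_center_le_center H)

theorem Subgroup.centralizer_singleton_eq_subgroupOf (H : Subgroup G) (h : H) :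
    centralizer ({h} : Set H) = (centralizer {(h : G)}).subgroupOf H := by
  ext x
  simp only [mem_centralizer_singleton_iff, mem_subgroupOf]
  exact Subtype.ext_iff

theorem cent_subgroup_eq_image_subgroupOf (H : Subgroup G) :
    cent H = (·.subgroupOf H) '' Set.range fun k : H => centralizer {(k : G)} := by
  rw [cent, ← Set.range_comp]
  exact congrArg Set.range (funext (centralizer_singleton_eq_subgroupOf H))

theorem injOn_subgroupOf_of_ncard_cent_eq (hfin : (cent G).Finite)
    (hcard : (cent H).ncard = (cent G).ncard) :
    Set.InjOn (·.subgroupOf H) (Set.range fun k : H => centralizer {(k : G)}) := by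
  set T := Set.range fun k : H => centralizer {(k : G)}
  have hT : T ⊆ cent G := Set.range_subset_iff.2 fun k => ⟨k, rfl⟩
  have hTfin : T.Finite := hfin.subset hT
  refine Set.injOn_of_ncard_image_eq (le_antisymm (Set.ncard_image_le hTfin) ?_) hTfin
  calc T.ncard ≤ (cent G).ncard := Set.ncard_le_ncard hT hfin
    _ = _ := by rw [← hcard, cent_subgroup_eq_image_subgroupOf]

theorem map_subtype_center_le_center_of_ncard_cent_eq (hfin : (cent G).Finite)
    (hcard : (cent H).ncard = (cent G).ncard) :
    (center H).map H.subtype ≤ center G := by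
  rintro _ ⟨m, hm, rfl⟩
  have hH : H ≤ centralizer {(m : G)} := fun k hk =>
    mem_centralizer_singleton_iff.2 (congrArg Subtype.val (mem_center_iff.1 hm ⟨k, hk⟩))
  have hone : centralizer {((1 : H) : G)} = ⊤ :=
    centralizer_eq_top_iff_subset.2 (by simp [Set.singleton_subset_iff, one_mem])
  have hcent : centralizer {(m : G)} = ⊤ := by
    rw [← hone]
    refine injOn_subgroupOf_of_ncard_cent_eq hfin hcard ⟨m, rfl⟩ ⟨1, rfl⟩ ?_
    simp only [subgroupOf_eq_top.2 hH, hone, subgroupOf_eq_top.2 le_top]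
  exact centralizer_eq_top_iff_subset.1 hcent rfl

end CentralizerRestriction

section SupCenterEqTop

open Subgroup
open scoped commutatorElement

variable {G : Type*} [Group G] {H : Subgroup G}

theorem commutatorElement_mul_mul_of_mem_center (a b : G) {z w : G} (hz : z ∈ center G)
    (hw : w ∈ center G) : ⁅a * z, b * w⁆ = ⁅a, b⁆ := by
  have hzc : ∀ c : G, ⁅z, c⁆ = 1 := fun c =>
    commutatorElement_eq_one_iff_mul_comm.2 (mem_center_iff.1 hz c).symm
  have hcw : ∀ c : G, ⁅c, w⁆ = 1 := fun c =>
    commutatorElement_eq_one_iff_mul_comm.2 (mem_center_iff.1 hw c)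
  rw [commutatorElement_mul_right_eq_mul_conj, hcw, commutatorElement_mul_left_eq_conj_mul, hzc]
  simp only [mul_one, mul_inv_cancel, one_mul, mul_inv_cancel_right]

theorem Subgroup.exists_mul_eq_of_sup_center_eq_top (hH : H ⊔ center G = ⊤) (g : G) :
    ∃ h ∈ H, ∃ z ∈ center G, h * z = g :=
  mem_sup_of_normal_right.1 (hH ▸ mem_top g)

theorem Subgroup.commutator_eq_of_sup_center_eq_top (hH : H ⊔ center G = ⊤) :
    ⁅H, H⁆ = _root_.commutator G := by
  refine le_antisymm (commutator_mono le_top le_top) ?_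
  rw [_root_.commutator_def, commutator_le]
  intro g₁ _ g₂ _
  obtain ⟨h₁, hh₁, z₁, hz₁, rfl⟩ := exists_mul_eq_of_sup_center_eq_top hH g₁
  obtain ⟨h₂, hh₂, z₂, hz₂, rfl⟩ := exists_mul_eq_of_sup_center_eq_top hH g₂
  rw [commutatorElement_mul_mul_of_mem_center _ _ hz₁ hz₂]
  exact commutator_mem_commutator hh₁ hh₂

theorem Subgroup.center_eq_subgroupOf_of_sup_center_eq_top (hH : H ⊔ center G = ⊤) :
    center H = (center G).subgroupOf H := by
  refine le_antisymm (fun h hh => mem_subgroupOf.2 (mem_center_iff.2 fun g => ?_))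
    (subgroupOf_center_le_center H)
  obtain ⟨k, hk, z, hz, rfl⟩ := exists_mul_eq_of_sup_center_eq_top hH g
  have hkh : k * h = h * k := congrArg Subtype.val (mem_center_iff.1 hh ⟨k, hk⟩)
  rw [mul_assoc, ← mem_center_iff.1 hz, ← mul_assoc, hkh, mul_assoc]

theorem Subgroup.surjective_mk'_comp_subtype_of_sup_center_eq_top (hH : H ⊔ center G = ⊤) :
    Function.Surjective ((QuotientGroup.mk' (center G)).comp H.subtype) := by
  intro q
  obtain ⟨g, rfl⟩ := QuotientGroup.mk_surjective q
  obtain ⟨h, hh, z, hz, rfl⟩ := exists_mul_eq_of_sup_center_eq_top hH g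
  exact ⟨⟨h, hh⟩, QuotientGroup.eq.2 (by simpa using hz)⟩

noncomputable def Subgroup.quotientCenterEquivOfSupCenterEqTop (hH : H ⊔ center G = ⊤) :
    H ⧸ center H ≃* G ⧸ center G :=
  (QuotientGroup.quotientMulEquivOfEq <| by
      rw [center_eq_subgroupOf_of_sup_center_eq_top hH, ← MonoidHom.comap_ker,
        QuotientGroup.ker_mk']
      rfl).trans
    (QuotientGroup.quotientKerEquivOfSurjective _
      (surjective_mk'_comp_subtype_of_sup_center_eq_top hH))

end SupCenterEqTop

theorem center_eq_or_isoclinic_of_maximal_same_cent_card (G : Type*) [Group G]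
    (hfin : (cent G).Finite) (M : Subgroup G) (hM : IsCoatom M)
    (h : (cent M).ncard = (cent G).ncard) :
    (Subgroup.center M).map M.subtype = Subgroup.center G ∨
      (M ⊔ Subgroup.center G = ⊤ ∧ ⁅M, M⁆ = commutator G ∧
        Nonempty ((M ⧸ Subgroup.center M) ≃* (G ⧸ Subgroup.center G))) := by
  by_cases hZ : Subgroup.center G ≤ M
  · exact .inl <| le_antisymm (map_subtype_center_le_center_of_ncard_cent_eq hfin h)
      (Subgroup.center_le_map_subtype_center hZ)
  · have hsup : M ⊔ Subgroup.center G = ⊤ := hM.2 _ (left_lt_sup.2 hZ)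
    exact .inr ⟨hsup, Subgroup.commutator_eq_of_sup_center_eq_top hsup,
      ⟨Subgroup.quotientCenterEquivOfSupCenterEqTop hsup⟩⟩
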